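/- Let S be an n×n Seidel matrix whose underlying graph Γ (with adjacency matrix A = (J−I−S)/2) is an Euler graph, i.e., every vertex has even degree. Then S² ≡ (n−2)J + I modulo 4 (entrywise). -/
import Mathlib


def IsSeidel {n : ℕ} (S : Matrix (Fin n) (Fin n) ℤ) : Prop :=
  S.IsSymm ∧ (∀ i, S i i = 0) ∧ ∀ i j, i ≠ j → S i j = 1 ∨ S i j = -1

/-- The all-ones matrix. -/
def Jmat (n : ℕ) : Matrix (Fin n) (Fin n) ℤ := Matrix.of fun _ _ => 1

theorem seidel_sq_mod_four_of_euler {n : ℕ} (S A : Matrix (Fin n) (Fin n) ℤ)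
    (hS : IsSeidel S) (hA : S = Jmat n - 1 - 2 • A)
    (hA01 : ∀ i j, A i j = 0 ∨ A i j = 1)
    (hEuler : ∀ i, Even (∑ j, A i j)) :
    ∀ i j, (S * S) i j ≡ (((n : ℤ) - 2) • Jmat n + 1) i j [ZMOD 4] := by
  obtain ⟨hsymm, hdiag, hpm⟩ := hS
  have hSij : ∀ a b, S a b = 1 - (if a = b then (1:ℤ) else 0) - 2 * A a b := by
    intro a b
    rw [hA]
    simp only [Matrix.sub_apply, Matrix.smul_apply, Matrix.one_apply, Jmat, Matrix.of_apply,
      smul_eq_mul]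
    norm_num
  have hAsymm : ∀ a b, A b a = A a b := by
    intro a b
    have h1 : S a b = S b a := (hsymm.apply a b).symm
    rw [hSij, hSij] at h1
    by_cases h : a = b
    · subst h; linarith
    · simp [h, Ne.symm h] at h1; linarith
  intro i j
  have key : (S * S) i j = (n:ℤ) - 2 + (if i = j then 1 else 0) +
      (4 * A i j + 4 * ∑ k, A i k * A k j - 2 * ∑ k, A i k - 2 * ∑ k, A k j) := by
    rw [Matrix.mul_apply]
    have hterm : ∀ k : Fin n, S i k * S k j =
        1 - (if i = k then (1:ℤ) else 0) - (if k = j then (1:ℤ) else 0)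
        + (if i = k then (if k = j then (1:ℤ) else 0) else 0)
        - 2 * A k j + (if i = k then 2 * A k j else 0)
        - 2 * A i k + (if k = j then 2 * A i k else 0)
        + 4 * (A i k * A k j) := by
      intro k
      rw [hSij, hSij]
      split_ifs <;> ring
    rw [Finset.sum_congr rfl fun k _ => hterm k]
    simp only [Finset.sum_add_distrib, Finset.sum_sub_distrib, Finset.sum_const,
      Finset.card_univ, Fintype.card_fin, Finset.sum_ite_eq, Finset.sum_ite_eq',
      Finset.mem_univ, if_true, ← Finset.mul_sum, nsmul_eq_mul, mul_one]
    ring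
  have hrhs : (((n : ℤ) - 2) • Jmat n + 1) i j = (n:ℤ) - 2 + (if i = j then 1 else 0) := by
    simp [Jmat, Matrix.add_apply, Matrix.smul_apply, Matrix.one_apply]
  rw [key, hrhs]
  obtain ⟨a, ha⟩ := hEuler i
  have hcol : ∑ k, A k j = ∑ k, A j k := by
    apply Finset.sum_congr rfl
    intro k _
    exact hAsymm j k
  obtain ⟨b, hb⟩ := hEuler j
  rw [hcol] at *
  have : (4:ℤ) ∣ ((n:ℤ) - 2 + (if i = j then 1 else 0)) -
      ((n:ℤ) - 2 + (if i = j then 1 else 0) +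
      (4 * A i j + 4 * ∑ k, A i k * A k j - 2 * ∑ k, A i k - 2 * ∑ k, A j k)) := by
    refine ⟨-(A i j + (∑ k, A i k * A k j) - a - b), ?_⟩
    rw [ha, hb]
    push_cast
    ring
  exact Int.modEq_iff_dvd.mpr this
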